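/- arXiv:1608.03329 — 4 statements merged into one kernel-verified Lean document; each statement's English description precedes it below -/
import Mathlib

section
/- For all integers a and b, 3 divides the determinant of M₁(a,b) if and only if either (a ≡ 0 (mod 3) and b ≡ 2 (mod 3)) or (a ≡ 1 (mod 3) and b ≡ 1 (mod 3)). (By Cappell–Shaneson's criterion, this is exactly the condition for the two-bridge slice knot K₁(a,b) to admit an irregular three-fold dihedral branched cover.) -/
/-!
As for any ribbon knot, the determinant is, up to sign, a perfect square:
`det M₁(a,b) = -(8ab + 2b - 1)²`. Since 3 is prime, it divides the determinant iff it divides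
`8ab + 2b - 1 ≡ -(b(a + 1) + 1) (mod 3)`, which depends only on the residues of `a` and `b`.
-/

open Matrix

def M1 (a b : ℤ) : Matrix (Fin 6) (Fin 6) ℤ :=
  !![-2*a,    1,    0,    0,    0,    0;
        1,    2,   -1,    0,    0,    0;
        0,   -1, -2*b,    1,    0,    0;
        0,    0,    1,   -2,   -1,    0;
        0,    0,    0,   -1,  2*a,    1;
        0,    0,    0,    0,    1,  2*b]

theorem det_M1_eq_neg_sq (a b : ℤ) : (M1 a b).det = -(8 * a * b + 2 * b - 1) ^ 2 := by
  simp [M1, det_succ_row_zero, Fin.sum_univ_succ, Fin.succAbove]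
  ring

theorem three_dvd_eight_mul_mul_add_two_mul_sub_one_iff (a b : ℤ) :
    3 ∣ 8 * a * b + 2 * b - 1 ↔ (a % 3 = 0 ∧ b % 3 = 2) ∨ (a % 3 = 1 ∧ b % 3 = 1) := by
  have h_emod : (8 * a * b + 2 * b - 1) % 3 = (8 * (a % 3) * (b % 3) + 2 * (b % 3) - 1) % 3 := by
    simp [Int.add_emod, Int.mul_emod, Int.sub_emod]
  rw [Int.dvd_iff_emod_eq_zero, h_emod]
  have ha₀ := Int.emod_nonneg a three_ne_zero
  have ha₃ := Int.emod_lt_of_pos a three_pos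
  have hb₀ := Int.emod_nonneg b three_ne_zero
  have hb₃ := Int.emod_lt_of_pos b three_pos
  interval_cases a % 3 <;> interval_cases b % 3 <;> decide

theorem three_dvd_det_M1_iff (a b : ℤ) :
    (3 : ℤ) ∣ (M1 a b).det ↔ (a % 3 = 0 ∧ b % 3 = 2) ∨ (a % 3 = 1 ∧ b % 3 = 1) := by
  rw [det_M1_eq_neg_sq, dvd_neg, Int.prime_three.dvd_pow_iff_dvd two_ne_zero]
  exact three_dvd_eight_mul_mul_add_two_mul_sub_one_iff a b
end

section
/- For all integers a and b, 3 divides the determinant of M₂(a,b) if and only if either (a ≡ 0 (mod 3) and b ≡ 1 (mod 3)) or (a ≡ 1 (mod 3) and b ≡ 0 (mod 3)). (By Cappell–Shaneson's criterion, this is exactly the condition for the two-bridge slice knot K₂(a,b) to admit an irregular three-fold dihedral branched cover.) -/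
/-!
The determinant of `M2 a b` is `-(8ab + 2a + 2b + 1)²`, minus a square as the Fox–Milnor
condition predicts for a ribbon knot. Since 3 is prime, it divides the determinant iff it divides
`8ab + 2a + 2b + 1 ≡ 2 - (a + 1)(b + 1) (mod 3)`, i.e. iff `(a + 1)(b + 1) ≡ 2 (mod 3)`,
which singles out the residue pairs `(0, 1)` and `(1, 0)`.
-/

open Matrix

def M2 (a b : ℤ) : Matrix (Fin 6) (Fin 6) ℤ :=
  !![-2*a,    1,    0,    0,    0,    0;
        1,    2,   -1,    0,    0,    0;
        0,   -1, -2*b,    1,    0,    0;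
        0,    0,    1,  2*a,   -1,    0;
        0,    0,    0,   -1,   -2,    1;
        0,    0,    0,    0,    1,  2*b]

theorem det_M2_eq_neg_sq (a b : ℤ) : (M2 a b).det = -(8 * a * b + 2 * a + 2 * b + 1) ^ 2 := by
  simp [M2, det_succ_row_zero, Fin.sum_univ_succ, Fin.succAbove]
  ring

theorem three_dvd_eight_mul_mul_add_iff (a b : ℤ) :
    (3 : ℤ) ∣ 8 * a * b + 2 * a + 2 * b + 1 ↔
      (a % 3 = 0 ∧ b % 3 = 1) ∨ (a % 3 = 1 ∧ b % 3 = 0) := by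
  rw [Int.dvd_iff_emod_eq_zero]
  have ha : a % 3 = 0 ∨ a % 3 = 1 ∨ a % 3 = 2 := by omega
  have hb : b % 3 = 0 ∨ b % 3 = 1 ∨ b % 3 = 2 := by omega
  rcases ha with ha | ha | ha <;> rcases hb with hb | hb | hb <;>
    simp [Int.add_emod, Int.mul_emod, ha, hb]

theorem three_dvd_det_M2_iff (a b : ℤ) :
    (3 : ℤ) ∣ (M2 a b).det ↔ (a % 3 = 0 ∧ b % 3 = 1) ∨ (a % 3 = 1 ∧ b % 3 = 0) := by
  rw [det_M2_eq_neg_sq, dvd_neg, Int.prime_three.dvd_pow_iff_dvd two_ne_zero,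
    three_dvd_eight_mul_mul_add_iff]
end

section
/- Let a and b be integers with a ≡ 0 (mod 3) and b ≡ 2 (mod 3), and let M̄ be the reduction of M₁(a,b) modulo 3, a 6×6 matrix over ℤ/3ℤ. Then a vector v ∈ (ℤ/3ℤ)⁶ satisfies M̄ · v = 0 if and only if v = 0, v = β, or v = −β, where β = (1, 0, 1, 1, −1, 1). In particular, the mod 3 kernel of M₁(a,b) is one-dimensional, spanned by β. -/
/-!
Modulo 3, with `a ≡ 0` and `b ≡ 2`, the equations of rows 0–4 of `M₁(a,b) v = 0` solve by back
substitution to `v = v₀ • β`; the last row then reads `3 v₀ = 0` and holds automatically, so the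
kernel is the line spanned by `β`, whose points over `ℤ/3ℤ` are `0`, `β` and `-β`.
-/

open Matrix

section

variable {R : Type*} [CommRing R]

theorem M1_map_intCast_mulVec (a b : ℤ) (v : Fin 6 → R) :
    (M1 a b).map (Int.cast : ℤ → R) *ᵥ v =
      ![-2 * a * v 0 + v 1, v 0 + 2 * v 1 - v 2, -v 1 - 2 * b * v 2 + v 3,
        v 2 - 2 * v 3 - v 4, -v 3 + 2 * a * v 4 + v 5, v 4 + 2 * b * v 5] := by
  ext i
  fin_cases i <;> simp [M1, mulVec, dotProduct, Fin.sum_univ_succ] <;> ring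

theorem M1_map_intCast_mulVec_eq_zero_iff [CharP R 3] {a b : ℤ} (ha : (a : R) = 0)
    (hb : (b : R) = 2) (v : Fin 6 → R) :
    (M1 a b).map (Int.cast : ℤ → R) *ᵥ v = 0 ↔ v = v 0 • ![1, 0, 1, 1, -1, 1] := by
  have hchar : (3 : R) = 0 := by exact_mod_cast CharP.cast_eq_zero R 3
  rw [M1_map_intCast_mulVec, ha, hb]
  constructor
  · intro h
    have hv1 : v 1 = 0 := by simpa using congrFun h 0
    have row1 := congrFun h 1
    have row2 := congrFun h 2
    have row3 := congrFun h 3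
    have row4 := congrFun h 4
    simp only [cons_val, Pi.zero_apply] at row1 row2 row3 row4
    have hv2 : v 2 = v 0 := by linear_combination 2 * hv1 - row1
    have hv3 : v 3 = v 0 := by linear_combination row2 + hv1 + 4 * hv2 + v 0 * hchar
    have hv4 : v 4 = -v 0 := by linear_combination -row3 + hv2 - 2 * hv3
    have hv5 : v 5 = v 0 := by linear_combination row4 + hv3
    ext i
    fin_cases i <;> simp [hv1, hv2, hv3, hv4, hv5]
  · intro h
    rw [h]
    ext i
    fin_cases i <;> simp <;> ring_nf <;> simp [hchar]

end

theorem ZMod.three_eq_zero_or_eq_one_or_eq_neg_one (c : ZMod 3) : c = 0 ∨ c = 1 ∨ c = -1 := by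
  revert c
  decide

theorem mod3_kernel_M1_case1 (a b : ℤ) (ha : a % 3 = 0) (hb : b % 3 = 2)
    (v : Fin 6 → ZMod 3) :
    ((M1 a b).map (Int.cast : ℤ → ZMod 3)).mulVec v = 0 ↔
      v = 0 ∨ v = ![1, 0, 1, 1, -1, 1] ∨ v = -![1, 0, 1, 1, -1, 1] := by
  have ha' : (a : ZMod 3) = 0 := by simpa [ha] using (ZMod.intCast_mod a 3).symm
  have hb' : (b : ZMod 3) = 2 := by simpa [hb] using (ZMod.intCast_mod b 3).symm
  rw [M1_map_intCast_mulVec_eq_zero_iff ha' hb']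
  constructor
  · intro hv
    rcases ZMod.three_eq_zero_or_eq_one_or_eq_neg_one (v 0) with h0 | h0 | h0 <;>
      rw [hv, h0] <;> simp
  · rintro (rfl | rfl | rfl) <;> decide
end

section
/- Let a and b be integers with a ≡ 0 (mod 3) and b ≡ 1 (mod 3), and let M̄ be the reduction of M₂(a,b) modulo 3, a 6×6 matrix over ℤ/3ℤ. Then a vector v ∈ (ℤ/3ℤ)⁶ satisfies M̄ · v = 0 if and only if v = 0, v = β, or v = −β, where β = (1, 0, 1, −1, 1, 1). In particular, the mod 3 kernel of M₂(a,b) is one-dimensional, spanned by β. -/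
open Matrix

/-!
Modulo 3, with `a ≡ 0` and `b ≡ 1`, the equations `M₂(a,b) v = 0` read row by row as a
recursion: the first row forces `v₁ = 0` and each of the next four rows determines the next
coordinate, giving `v = v₀ • (1, 0, 1, -1, 1, 1)`. The last row then says `3 v₀ = 0`, which
holds in characteristic 3, so the kernel is the line through `β` in every ring of
characteristic 3, and over `ℤ/3ℤ` that line is `{0, β, -β}`.
-/

section
variable {R : Type*} [CommRing R]

def M2KernelGen : Fin 6 → R := ![1, 0, 1, -1, 1, 1]

lemma map_intCast_M2_mulVec (a b : ℤ) (v : Fin 6 → R) :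
    (M2 a b).map (Int.cast : ℤ → R) *ᵥ v =
      ![-2 * a * v 0 + v 1, v 0 + 2 * v 1 - v 2, -v 1 - 2 * b * v 2 + v 3,
        v 2 + 2 * a * v 3 - v 4, -v 3 - 2 * v 4 + v 5, v 4 + 2 * b * v 5] := by
  ext i
  fin_cases i <;> simp [M2, mulVec, dotProduct, Fin.sum_univ_six] <;> ring

lemma intCast_eq_one_of_emod_eq_one (p : ℕ) [CharP R p] {b : ℤ} (hb : b % p = 1) :
    (b : R) = 1 := by
  have h : ((b % p : ℤ) : R) = b := by
    rw [(CharP.intCast_eq_intCast R p).2 (Int.mod_modEq b p)]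
  rw [← h, hb, Int.cast_one]

lemma map_intCast_M2_mulVec_eq_zero_iff [CharP R 3] {a b : ℤ} (ha : a % 3 = 0)
    (hb : b % 3 = 1) (v : Fin 6 → R) :
    (M2 a b).map (Int.cast : ℤ → R) *ᵥ v = 0 ↔ ∃ t : R, v = t • M2KernelGen := by
  have ha' : (a : R) = 0 := (CharP.intCast_eq_zero_iff R 3 a).2 (Int.dvd_of_emod_eq_zero ha)
  have hb' : (b : R) = 1 := intCast_eq_one_of_emod_eq_one 3 hb
  have h3 : (3 : R) = 0 := by exact_mod_cast CharP.cast_eq_zero R 3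
  rw [map_intCast_M2_mulVec, ha', hb']
  constructor
  · intro h
    obtain ⟨e0, e1, e2, e3, e4, -⟩ : v 1 = 0 ∧ v 0 + 2 * v 1 - v 2 = 0 ∧
        -v 1 - 2 * v 2 + v 3 = 0 ∧ v 2 - v 4 = 0 ∧ -v 3 - 2 * v 4 + v 5 = 0 ∧
        v 4 + 2 * v 5 = 0 := by
      simpa [Fin.forall_fin_succ] using congrFun h
    have v2 : v 2 = v 0 := by linear_combination -e1 + 2 * e0
    have v3 : v 3 = -v 0 := by linear_combination e2 + e0 + 2 * v2 + v 0 * h3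
    have v4 : v 4 = v 0 := by linear_combination -e3 + v2
    have v5 : v 5 = v 0 := by linear_combination e4 + v3 + 2 * v4
    refine ⟨v 0, ?_⟩
    ext i
    fin_cases i <;> simp [M2KernelGen, e0, v2, v3, v4, v5]
  · rintro ⟨t, rfl⟩
    ext i
    fin_cases i <;> simp [M2KernelGen] <;> ring_nf <;> simp [h3]
end

theorem mod3_kernel_M2_case1 (a b : ℤ) (ha : a % 3 = 0) (hb : b % 3 = 1)
    (v : Fin 6 → ZMod 3) :
    ((M2 a b).map (Int.cast : ℤ → ZMod 3)).mulVec v = 0 ↔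
      v = 0 ∨ v = ![1, 0, 1, -1, 1, 1] ∨ v = -![1, 0, 1, -1, 1, 1] := by
  rw [map_intCast_M2_mulVec_eq_zero_iff ha hb]
  constructor
  · rintro ⟨t, rfl⟩
    obtain rfl | rfl | rfl : t = 0 ∨ t = 1 ∨ t = -1 := by decide +revert
    all_goals simp [M2KernelGen]
  · rintro (rfl | rfl | rfl)
    exacts [⟨0, by simp⟩, ⟨1, by simp [M2KernelGen]⟩, ⟨-1, by simp [M2KernelGen]⟩]
end
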